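/- arXiv:2601.20653 — 2 statements merged into one kernel-verified Lean document; each statement's English description precedes it below -/
import Mathlib

section
/- (Subadditivity of the pile.) Let (α_k, σ_k), k ≥ 0, be jobs with 1 ≤ α_k ≤ s and σ_k ≥ 0, and for m ≤ n let H_{[m,n)} denote the pile obtained by applying the pile maps Ψ_{α_m,σ_m}, …, Ψ_{α_{n-1},σ_{n-1}} in order starting from the zero vector. Then for all m, n ≥ 0, |H_{[0,m+n)}|_∞ ≤ |H_{[0,m)}|_∞ + |H_{[m,m+n)}|_∞, where |·|_∞ denotes the maximum coordinate. -/
/-- The nondecreasing rearrangement operator `R` on vectors of ℝ^s. -/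
noncomputable def sortVec {s : ℕ} (v : Fin s → ℝ) : Fin s → ℝ := v ∘ Tuple.sort v

/-- The all-ones vector `U`. -/
def Uvec (s : ℕ) : Fin s → ℝ := fun _ => 1

/-- `L(α)`: coordinate `i` is `1` if `i ≤ α` and `0` otherwise (indices 0-based,
so `α : Fin s` represents the number of requested servers `α+1 ∈ {1,…,s}`). -/
def Lvec {s : ℕ} (α : Fin s) : Fin s → ℝ := fun i => if i ≤ α then 1 else 0

/-- `S(α, W)`: coordinate `i` is `max (W^α) (W^i)`. -/
def Svec {s : ℕ} (α : Fin s) (W : Fin s → ℝ) : Fin s → ℝ := fun i => max (W α) (W i)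

/-- A vector is ordered if its coordinates are nondecreasing and nonnegative. -/
def IsOrdered {s : ℕ} (W : Fin s → ℝ) : Prop := Monotone W ∧ ∀ i, 0 ≤ W i

/-- The one-step MJSRE map `Φ_{α,σ,τ}(W) = R(S(α,W) + σ·L(α) − τ·U)⁺`. -/
noncomputable def Phi {s : ℕ} (α : Fin s) (σ τ : ℝ) (W : Fin s → ℝ) : Fin s → ℝ :=
  sortVec (fun i => max (Svec α W i + σ * Lvec α i - τ * Uvec s i) 0)

/-- The one-step pile map `Ψ_{α,σ}(W) = R(S(α,W) + σ·L(α))`. -/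
noncomputable def Psi {s : ℕ} (α : Fin s) (σ : ℝ) (W : Fin s → ℝ) : Fin s → ℝ :=
  sortVec (fun i => Svec α W i + σ * Lvec α i)

/-- `pileFrom a σf W m j` is the result `H_{[m, m+j)}(W)` of applying the pile maps
`Ψ_{α_m,σ_m}, …, Ψ_{α_{m+j-1},σ_{m+j-1}}` in order starting from the vector `W`. -/
noncomputable def pileFrom {s : ℕ} (a : ℕ → Fin s) (σf : ℕ → ℝ) (W : Fin s → ℝ) (m : ℕ) :
    ℕ → (Fin s → ℝ)
  | 0 => W
  | j + 1 => Psi (a (m + j)) (σf (m + j)) (pileFrom a σf W m j)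


/-!
Running the jobs `0, …, m+n−1` from `0` is the same as running the jobs `m, …, m+n−1` from
`H = H_{[0,m)}`. Each pile map is monotone, since sorting is, and commutes with adding a constant
to every coordinate, since `max`, sums and sorting do. Comparing `H` with the constant vector
`|H|_∞ · U` thus gives `H_{[0,m+n)} ≤ H_{[m,m+n)} + |H|_∞ · U` coordinatewise.
-/

open Finset

section sortVec

variable {s : ℕ}

theorem sortVec_le_iff (v : Fin s → ℝ) (k : Fin s) (a : ℝ) :
    sortVec v k ≤ a ↔ k < #{i | v i ≤ a} := by
  unfold sortVec
  rw [← Tuple.lt_card_le_iff_apply_le_of_monotone (Tuple.monotone_sort v)]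
  exact iff_of_eq (congrArg _ (card_equiv (Tuple.sort v) (by simp)))

theorem sortVec_mono : Monotone (sortVec (s := s)) := by
  intro v w hvw k
  rw [sortVec_le_iff]
  calc (k : ℕ) < #{i | w i ≤ sortVec w k} := (sortVec_le_iff w k _).1 le_rfl
    _ ≤ #{i | v i ≤ sortVec w k} := card_le_card fun i ↦ by simpa using (hvw i).trans

theorem sortVec_comp_of_monotone {f : ℝ → ℝ} (hf : Monotone f) (v : Fin s → ℝ) :
    sortVec (f ∘ v) = f ∘ sortVec v := by
  unfold sortVec
  exact (Tuple.comp_sort_eq_comp_iff_monotone.2 (hf.comp (Tuple.monotone_sort v))).symm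

theorem sortVec_add_const (v : Fin s → ℝ) (c : ℝ) :
    sortVec (fun i ↦ v i + c) = fun i ↦ sortVec v i + c :=
  sortVec_comp_of_monotone (f := (· + c)) (fun _ _ h ↦ add_le_add h le_rfl) v

end sortVec

section Psi

variable {s : ℕ} (α : Fin s) (σ : ℝ)

theorem Psi_mono : Monotone (Psi α σ) := fun _ _ h ↦
  sortVec_mono fun i ↦ add_le_add (max_le_max (h α) (h i)) le_rfl

theorem Psi_add_const (W : Fin s → ℝ) (c : ℝ) :
    Psi α σ (fun i ↦ W i + c) = fun i ↦ Psi α σ W i + c := by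
  unfold Psi
  rw [← sortVec_add_const]
  congr 1
  ext i
  simp only [Svec, max_add_add_right]
  ring

end Psi

section pileFrom

variable {s : ℕ} (a : ℕ → Fin s) (σf : ℕ → ℝ)

theorem pileFrom_mono (m n : ℕ) : Monotone fun W ↦ pileFrom a σf W m n := by
  induction n with
  | zero => exact monotone_id
  | succ n ih => exact (Psi_mono _ _).comp ih

theorem pileFrom_add_const (W : Fin s → ℝ) (c : ℝ) (m n : ℕ) :
    pileFrom a σf (fun i ↦ W i + c) m n = fun i ↦ pileFrom a σf W m n i + c := by
  induction n with
  | zero => rfl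
  | succ n ih => rw [pileFrom, ih, Psi_add_const]; rfl

theorem pileFrom_zero_add (W : Fin s → ℝ) (m n : ℕ) :
    pileFrom a σf W 0 (m + n) = pileFrom a σf (pileFrom a σf W 0 m) m n := by
  induction n with
  | zero => rfl
  | succ n ih => rw [← add_assoc, pileFrom, ih, zero_add]; rfl

theorem pileFrom_le_add_of_le {W : Fin s → ℝ} {c : ℝ} (hW : ∀ i, W i ≤ c) (m n : ℕ) :
    pileFrom a σf W m n ≤ fun i ↦ pileFrom a σf 0 m n i + c := by
  rw [← pileFrom_add_const]
  exact pileFrom_mono a σf m n fun i ↦ by simpa using hW i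

end pileFrom

theorem pile_subadditive_general (s : ℕ) (hs : 0 < s)
    (a : ℕ → Fin s) (σf : ℕ → ℝ) :
    ∀ m n : ℕ,
      (⨆ i, pileFrom a σf 0 0 (m + n) i)
        ≤ (⨆ i, pileFrom a σf 0 0 m i) + ⨆ i, pileFrom a σf 0 m n i := by
  intro m n
  have : Nonempty (Fin s) := ⟨⟨0, hs⟩⟩
  have le_iSup_coord (W : Fin s → ℝ) (i : Fin s) : W i ≤ ⨆ j, W j :=
    le_ciSup (Set.finite_range W).bddAbove i
  refine ciSup_le fun i ↦ ?_
  calc pileFrom a σf 0 0 (m + n) i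
      ≤ pileFrom a σf 0 m n i + ⨆ j, pileFrom a σf 0 0 m j := by
        rw [pileFrom_zero_add]
        exact pileFrom_le_add_of_le a σf (le_iSup_coord _) m n i
    _ ≤ (⨆ j, pileFrom a σf 0 0 m j) + ⨆ j, pileFrom a σf 0 m n j := by
        rw [add_comm]
        exact add_le_add le_rfl (le_iSup_coord _ i)

/-- Subadditivity of the pile: with `H_{[m,n)}` the pile built from jobs `m, …, n−1`
starting from the zero vector, one has
`|H_{[0,m+n)}|_∞ ≤ |H_{[0,m)}|_∞ + |H_{[m,m+n)}|_∞`. -/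
theorem pile_subadditive (s : ℕ) (hs : 0 < s)
    (a : ℕ → Fin s) (σf : ℕ → ℝ) (hσ : ∀ k, 0 ≤ σf k) :
    ∀ m n : ℕ,
      (⨆ i, pileFrom a σf 0 0 (m + n) i)
        ≤ (⨆ i, pileFrom a σf 0 0 m i) + ⨆ i, pileFrom a σf 0 m n i :=
  pile_subadditive_general s hs a σf
end

section
/- (Monotonicity of the multiresource multiserver-job map.) Fix T ≥ 1 resource types with capacities s_1, …, s_T ≥ 1, a demand vector ᾱ = (α^1, …, α^T) with 1 ≤ α^j ≤ s_j for each j, and σ, τ ≥ 0. The MMJSRE one-step map sending a T-tuple of ordered vectors W̄ = (W_1, …, W_T), W_j ∈ ℝ^{s_j}, to R(S̄(ᾱ, W̄) + σ·L̄(ᾱ) − τ·U)^+ is coordinatewise nondecreasing: if W̄ ≤ W̄' (meaning W_j ≤ W'_j coordinatewise for each j), then the images satisfy the same inequality. -/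
/-- A tuple of vectors is ordered if each component vector has nondecreasing
nonnegative coordinates. -/
def MIsOrdered {T : ℕ} {sv : Fin T → ℕ} (W : ∀ j, Fin (sv j) → ℝ) : Prop :=
  ∀ j, Monotone (W j) ∧ ∀ i, 0 ≤ W j i

/-- The one-step MMJSRE map: component `j` is
`R(S̄_j(ᾱ,W̄) + σ·L(α^j) − τ·U)⁺`, where `S̄_j(ᾱ,W̄)^i = max_{j'} W_{j'}^{α^{j'}}` for
`i ≤ α^j` and `W_j^i` otherwise, and `L(α^j)^i = 1` for `i ≤ α^j`, `0` otherwise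
(indices 0-based, `α j : Fin (sv j)` representing the demand `α^j ∈ {1,…,s_j}`). -/
noncomputable def MPhi {T : ℕ} {sv : Fin T → ℕ} (α : ∀ j, Fin (sv j)) (σ τ : ℝ)
    (W : ∀ j, Fin (sv j) → ℝ) : ∀ j, Fin (sv j) → ℝ :=
  fun j => sortVec (fun i =>
    max ((if i ≤ α j then ⨆ j', W j' (α j') else W j i)
        + σ * (if i ≤ α j then 1 else 0) - τ) 0)

/-! Before sorting, every entry of the map is built from entries of `W̄` by `max`, adding
constants and taking positive parts, so it is monotone in `W̄`. Sorting preserves pointwise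
order because the `j`-th smallest entry of `v` is at most `a` iff `j < #{i | v i ≤ a}`, and these
counts can only drop when `v` increases. -/

open Finset

namespace Tuple

variable {n : ℕ} {α : Type*} [LinearOrder α]

lemma card_filter_comp_sort_le (f : Fin n → α) (a : α) :
    #{i | (f ∘ sort f) i ≤ a} = #{i | f i ≤ a} :=
  card_equiv (sort f) (by simp)

lemma comp_sort_mono : Monotone fun f : Fin n → α ↦ f ∘ sort f := by
  intro f g hfg j
  rw [← lt_card_le_iff_apply_le_of_monotone (monotone_sort f), card_filter_comp_sort_le]
  calc (j : ℕ) < #{i | g i ≤ (g ∘ sort g) j} := by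
        rw [← card_filter_comp_sort_le, lt_card_le_iff_apply_le_of_monotone (monotone_sort g)]
    _ ≤ #{i | f i ≤ (g ∘ sort g) j} :=
        card_le_card fun i ↦ by simpa using (hfg i).trans

end Tuple

theorem MPhi_mono_general (T : ℕ) (sv : Fin T → ℕ)
    (α : ∀ j, Fin (sv j)) (σ τ : ℝ)
    (W W' : ∀ j, Fin (sv j) → ℝ)
    (hle : ∀ j i, W j i ≤ W' j i) :
    ∀ j i, MPhi α σ τ W j i ≤ MPhi α σ τ W' j i := by
  intro j
  show sortVec _ ≤ sortVec _
  have hsup : ⨆ j', W j' (α j') ≤ ⨆ j', W' j' (α j') :=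
    ciSup_mono (Set.finite_range _).bddAbove fun j' ↦ hle j' (α j')
  refine Tuple.comp_sort_mono fun i ↦ ?_
  gcongr
  split
  · exact hsup
  · exact hle j i

/-- Monotonicity of the multiresource multiserver-job one-step map: if `W̄ ≤ W̄'`
componentwise (both ordered), then `MPhi ᾱ σ τ W̄ ≤ MPhi ᾱ σ τ W̄'` componentwise. -/
theorem MPhi_mono (T : ℕ) (hT : 0 < T) (sv : Fin T → ℕ) (hsv : ∀ j, 0 < sv j)
    (α : ∀ j, Fin (sv j)) (σ τ : ℝ) (hσ : 0 ≤ σ) (hτ : 0 ≤ τ)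
    (W W' : ∀ j, Fin (sv j) → ℝ) (hW : MIsOrdered W) (hW' : MIsOrdered W')
    (hle : ∀ j i, W j i ≤ W' j i) :
    ∀ j i, MPhi α σ τ W j i ≤ MPhi α σ τ W' j i :=
  MPhi_mono_general T sv α σ τ W W' hle
end
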